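/- Let (X, d) be a proper, uniquely geodesic, straight metric space which is C¹ along geodesics and has constant distance variation, with basepoint b. Suppose f and g lie in the horoboundary of X and that for every p ∈ X there exists a geodesic ray γ_p based at p such that f(γ_p(t)) = f(p) − t and g(γ_p(t)) = g(p) − t for all t ≥ 0 (i.e. f and g have the same optimal geodesic ray through every point of X). Then f = g. -/

import Mathlib

open Filter Topology
open scoped NNReal ENNReal

variable {X : Type*} [MetricSpace X]

/-- `γ` restricted to the set `s ⊆ ℝ` is a (unit-speed) geodesic:
`dist (γ u) (γ v) = |u - v|` for all `u, v ∈ s`. -/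
def IsGeodesicOn (γ : ℝ → X) (s : Set ℝ) : Prop :=
  ∀ u ∈ s, ∀ v ∈ s, dist (γ u) (γ v) = |u - v|

/-- `X` is uniquely geodesic: any two distinct points are joined by a geodesic
parametrized on `[0, dist a c]`, and any two such geodesics agree on that interval. -/
def UniquelyGeodesic (X : Type*) [MetricSpace X] : Prop :=
  ∀ a c : X, a ≠ c →
    ∃ γ : ℝ → X,
      (IsGeodesicOn γ (Set.Icc 0 (dist a c)) ∧ γ 0 = a ∧ γ (dist a c) = c) ∧
        ∀ γ' : ℝ → X,
          (IsGeodesicOn γ' (Set.Icc 0 (dist a c)) ∧ γ' 0 = a ∧ γ' (dist a c) = c) →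
            Set.EqOn γ' γ (Set.Icc 0 (dist a c))

/-- `X` is straight: every geodesic defined on a nondegenerate closed interval extends to a
unique bi-infinite geodesic (an isometric embedding of `ℝ`). -/
def Straight (X : Type*) [MetricSpace X] : Prop :=
  ∀ (γ : ℝ → X) (a c : ℝ), a < c → IsGeodesicOn γ (Set.Icc a c) →
    ∃! γ' : ℝ → X, Isometry γ' ∧ Set.EqOn γ' γ (Set.Icc a c)

/-- The space `D_b` of geodesic rays based at `b`, as a subspace of `C(ℝ≥0, X)`
(with the compact-open topology, i.e. uniform convergence on compact sets). -/
abbrev GeodesicRay (X : Type*) [MetricSpace X] (b : X) :=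
  {γ : C(ℝ≥0, X) // Isometry ⇑γ ∧ γ 0 = b}

/-- The horofunction embedding `h : X → C(X, ℝ)`, `h x y = d(x, y) - d(x, b)`. -/
noncomputable def horo (b x : X) : C(X, ℝ) :=
  ⟨fun y => dist x y - dist x b,
    (continuous_const.dist continuous_id).sub continuous_const⟩

/-- The horoboundary of `X` (with basepoint `b`): the closure of `h(X)` in `C(X, ℝ)`
minus `h(X)`. -/
def horoboundary (b : X) : Set C(X, ℝ) :=
  closure (Set.range (horo b)) \ Set.range (horo b)

/-- The setoid on `D_b × M` identifying all points whose second coordinate is `0`. -/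
def collapseSetoid (X : Type*) [MetricSpace X] (b : X) (M : Type*) [Zero M] :
    Setoid (GeodesicRay X b × M) where
  r p q := p = q ∨ (p.2 = 0 ∧ q.2 = 0)
  iseqv := by
    refine ⟨fun _ => Or.inl rfl, ?_, ?_⟩
    · rintro p q (rfl | ⟨h1, h2⟩)
      · exact Or.inl rfl
      · exact Or.inr ⟨h2, h1⟩
    · rintro p q r (rfl | ⟨h1, h2⟩) (rfl | ⟨h3, h4⟩)
      · exact Or.inl rfl
      · exact Or.inr ⟨h3, h4⟩
      · exact Or.inr ⟨h1, h2⟩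
      · exact Or.inr ⟨h1, h4⟩

/-- The visual compactification `X̄_b = (D_b × [0, ∞]) / (D_b × {0})`. -/
abbrev VisualCompactification (X : Type*) [MetricSpace X] (b : X) :=
  Quotient (collapseSetoid X b ℝ≥0∞)

/-- `X` is C¹ along geodesics: for a bi-infinite geodesic `γ` and a point `p` off `γ`,
`t ↦ d(γ t, p)` is differentiable, and the derivative depends continuously on `(t, p)`. -/
def C1AlongGeodesics (X : Type*) [MetricSpace X] : Prop :=
  ∀ γ : ℝ → X, Isometry γ →
    (∀ p, p ∉ Set.range γ → ∀ t : ℝ, DifferentiableAt ℝ (fun s => dist (γ s) p) t) ∧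
      ContinuousOn (fun q : ℝ × X => deriv (fun s => dist (γ s) q.2) q.1)
        {q : ℝ × X | q.2 ∉ Set.range γ}

/-- `X` has constant distance variation: for distinct bi-infinite geodesics `γ, η` with
`γ 0 = η 0`, either `(d/dt) d(γ t, η s)|_{t=0}` exists for all `s > 0` and is independent
of `s`, or it exists for no `s > 0`. -/
def ConstantDistanceVariation (X : Type*) [MetricSpace X] : Prop :=
  ∀ γ η : ℝ → X, Isometry γ → Isometry η → γ 0 = η 0 → γ ≠ η →
    ((∀ s : ℝ, 0 < s → DifferentiableAt ℝ (fun t => dist (γ t) (η s)) 0) ∧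
        ∀ s s' : ℝ, 0 < s → 0 < s' →
          deriv (fun t => dist (γ t) (η s)) 0 = deriv (fun t => dist (γ t) (η s')) 0) ∨
      ∀ s : ℝ, 0 < s → ¬ DifferentiableAt ℝ (fun t => dist (γ t) (η s)) 0

/-!
Elements of the closure of the horofunction embedding are 1-Lipschitz and vanish at `b`. Fix a
bi-infinite geodesic `σ`; by Rademacher `f ∘ σ` and `g ∘ σ` are differentiable at almost every
`τ`. If `w ≠ σ τ` lies on the common optimal ray from `σ τ`, then `f ≤ f w + dist · w` with
equality at `σ τ`, and likewise for `g`; since `t ↦ dist (σ t) w` is differentiable at `τ`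
(by the C¹ hypothesis, or because it is `|t - r|` when `w = σ r`), both derivatives at `τ` equal
its derivative. So the Lipschitz function `f ∘ σ - g ∘ σ` has a.e. vanishing derivative and is
constant. Any point is joined to `b` by such a `σ`, and `f b = g b = 0`.
-/

open Set MeasureTheory

lemma lipschitzWith_one_horo (b x : X) : LipschitzWith 1 (horo b x) := by
  have h := (LipschitzWith.dist_right x).sub (LipschitzWith.const (dist x b))
  rwa [add_zero] at h

lemma lipschitzWith_one_of_mem_closure_range_horo {b : X} {F : C(X, ℝ)}
    (hF : F ∈ closure (range (horo b))) : LipschitzWith 1 F :=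
  closure_minimal (t := {G : C(X, ℝ) | LipschitzWith 1 G})
    (by rintro _ ⟨x, rfl⟩; exact lipschitzWith_one_horo b x)
    ((isClosed_setOfPred_lipschitzWith 1).preimage continuous_coeFun) hF

lemma apply_eq_zero_of_mem_closure_range_horo {b : X} {F : C(X, ℝ)}
    (hF : F ∈ closure (range (horo b))) : F b = 0 :=
  closure_minimal (t := {G : C(X, ℝ) | G b = 0}) (by rintro _ ⟨x, rfl⟩; exact sub_self _)
    (isClosed_eq (continuous_eval_const b) continuous_const) hF

lemma dist_geodesicRay {p : X} (γ : GeodesicRay X p) (t : ℝ≥0) : dist p (γ.1 t) = t := by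
  obtain ⟨γ, hγ, rfl⟩ := γ
  rw [hγ.dist_eq, NNReal.dist_eq, NNReal.coe_zero, zero_sub, abs_neg, NNReal.abs_eq]

lemma exists_isometry_real_through (hU : UniquelyGeodesic X) (hS : Straight X) {a c : X}
    (hac : a ≠ c) : ∃ σ : ℝ → X, Isometry σ ∧ σ 0 = a ∧ σ (dist a c) = c := by
  obtain ⟨γ, ⟨hγ, hγa, hγc⟩, -⟩ := hU a c hac
  have hd : 0 < dist a c := dist_pos.mpr hac
  obtain ⟨σ, ⟨hσ, hσγ⟩, -⟩ := hS γ 0 (dist a c) hd hγ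
  exact ⟨σ, hσ, by rw [hσγ (left_mem_Icc.mpr hd.le), hγa],
    by rw [hσγ (right_mem_Icc.mpr hd.le), hγc]⟩

lemma differentiableAt_dist_of_isometry (hC1 : C1AlongGeodesics X) {σ : ℝ → X}
    (hσ : Isometry σ) {τ : ℝ} {w : X} (hw : w ≠ σ τ) :
    DifferentiableAt ℝ (fun t => dist (σ t) w) τ := by
  by_cases hwσ : w ∈ range σ
  · obtain ⟨r, rfl⟩ := hwσ
    have hτr : τ - r ≠ 0 := sub_ne_zero.mpr fun h => hw (congrArg σ h.symm)
    simp only [hσ.dist_eq, Real.dist_eq]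
    exact (differentiableAt_id.sub_const r).abs hτr
  · exact (hC1 σ hσ).1 w hwσ τ

lemma deriv_comp_eq_deriv_dist {F : X → ℝ} (hF : LipschitzWith 1 F) {σ : ℝ → X} {τ : ℝ}
    {w : X} (hw : F w = F (σ τ) - dist (σ τ) w)
    (hFσ : DifferentiableAt ℝ (fun t => F (σ t)) τ)
    (hd : DifferentiableAt ℝ (fun t => dist (σ t) w) τ) :
    deriv (fun t => F (σ t)) τ = deriv (fun t => dist (σ t) w) τ := by
  have hmax : IsLocalMax (fun t => F (σ t) - dist (σ t) w) τ := by
    refine Eventually.of_forall fun t => ?_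
    have hle := (le_abs_self _).trans (hF.dist_le_mul (σ t) w)
    rw [NNReal.coe_one, one_mul] at hle
    simp only at hle ⊢
    linarith
  have hzero := hmax.deriv_eq_zero
  rw [deriv_fun_sub hFσ hd] at hzero
  linarith

lemma ae_hasDerivAt_sub_comp_eq_zero (hC1 : C1AlongGeodesics X) {f g : X → ℝ}
    (hf : LipschitzWith 1 f) (hg : LipschitzWith 1 g)
    (hcommon : ∀ p, ∃ w ≠ p, f w = f p - dist p w ∧ g w = g p - dist p w)
    {σ : ℝ → X} (hσ : Isometry σ) :
    ∀ᵐ τ, HasDerivAt (fun t => f (σ t) - g (σ t)) 0 τ := by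
  filter_upwards [(hf.comp hσ.lipschitz).ae_differentiableAt (μ := volume),
    (hg.comp hσ.lipschitz).ae_differentiableAt (μ := volume)] with τ
    (hfσ : DifferentiableAt ℝ (fun t => f (σ t)) τ)
    (hgσ : DifferentiableAt ℝ (fun t => g (σ t)) τ)
  obtain ⟨w, hwp, hfw, hgw⟩ := hcommon (σ τ)
  have hd := differentiableAt_dist_of_isometry hC1 hσ hwp
  have hderiv : deriv (fun t => f (σ t)) τ = deriv (fun t => g (σ t)) τ :=
    (deriv_comp_eq_deriv_dist hf hfw hfσ hd).trans (deriv_comp_eq_deriv_dist hg hgw hgσ hd).symm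
  simpa only [hderiv, sub_self] using hfσ.hasDerivAt.fun_sub hgσ.hasDerivAt

lemma sub_eq_sub_of_forall_exists_common_descent (hU : UniquelyGeodesic X) (hS : Straight X)
    (hC1 : C1AlongGeodesics X) {f g : X → ℝ} (hf : LipschitzWith 1 f) (hg : LipschitzWith 1 g)
    (hcommon : ∀ p, ∃ w ≠ p, f w = f p - dist p w ∧ g w = g p - dist p w) (a c : X) :
    f a - g a = f c - g c := by
  rcases eq_or_ne a c with rfl | hac
  · rfl
  obtain ⟨σ, hσ, hσa, hσc⟩ := exists_isometry_real_through hU hS hac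
  have hlip := (hf.comp hσ.lipschitz).sub (hg.comp hσ.lipschitz)
  obtain ⟨C, hC⟩ := hlip.lipschitzOnWith.absolutelyContinuousOnInterval
    (a := 0) (b := dist a c) |>.const_of_ae_hasDerivAt_zero
    ((ae_hasDerivAt_sub_comp_eq_zero hC1 hf hg hcommon hσ).mono fun _ h _ => h)
  rw [← hσa, ← hσc]
  exact (hC _ left_mem_uIcc).trans (hC _ right_mem_uIcc).symm

theorem statement17_general (hU : UniquelyGeodesic X) (hS : Straight X)
    (hC1 : C1AlongGeodesics X) (b : X)
    (f g : C(X, ℝ)) (hf : f ∈ horoboundary b) (hg : g ∈ horoboundary b)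
    (hcommon : ∀ p : X, ∃ γ : GeodesicRay X p,
      (∀ t : ℝ≥0, f (γ.1 t) = f p - (t : ℝ)) ∧ (∀ t : ℝ≥0, g (γ.1 t) = g p - (t : ℝ))) :
    f = g := by
  have hdescent : ∀ p, ∃ w ≠ p, f w = f p - dist p w ∧ g w = g p - dist p w := by
    intro p
    obtain ⟨γ, hfγ, hgγ⟩ := hcommon p
    have hdist := dist_geodesicRay γ 1
    refine ⟨γ.1 1, fun h => ?_, ?_, ?_⟩
    · simp [h] at hdist
    · rw [hdist, hfγ]
    · rw [hdist, hgγ]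
  ext y
  have hy := sub_eq_sub_of_forall_exists_common_descent hU hS hC1
    (lipschitzWith_one_of_mem_closure_range_horo hf.1)
    (lipschitzWith_one_of_mem_closure_range_horo hg.1) hdescent b y
  rw [apply_eq_zero_of_mem_closure_range_horo hf.1,
    apply_eq_zero_of_mem_closure_range_horo hg.1] at hy
  linarith

/-- If two horofunctions `f` and `g` admit, through every point `p` of `X`, a
common optimal geodesic ray (one along which both decrease with unit speed from their value
at `p`), then `f = g`. -/
theorem statement17 [ProperSpace X] (hU : UniquelyGeodesic X) (hS : Straight X)
    (hC1 : C1AlongGeodesics X) (hCDV : ConstantDistanceVariation X) (b : X)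
    (f g : C(X, ℝ)) (hf : f ∈ horoboundary b) (hg : g ∈ horoboundary b)
    (hcommon : ∀ p : X, ∃ γ : GeodesicRay X p,
      (∀ t : ℝ≥0, f (γ.1 t) = f p - (t : ℝ)) ∧ (∀ t : ℝ≥0, g (γ.1 t) = g p - (t : ℝ))) :
    f = g :=
  statement17_general hU hS hC1 b f g hf hg hcommon
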